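/- arXiv:2001.09866 — 2 statements merged into one kernel-verified Lean document; each statement's English description precedes it below -/
import Mathlib

section
/- Let B: V×V → ℂ be a bounded sesquilinear form on a Hilbert space V with boundedness constant γ, and suppose for each F in the dual V' the adjoint problem B(ξ, z_F) (conjugated) = ⟨F, ξ⟩ for all ξ ∈ V has a solution z_F. If u − u_M satisfies the Galerkin orthogonality B(u − u_M, v_M) = 0 for all v_M in a subspace V_M, then for any Hilbert space H ⊇ V with dual pairing realized through H, ‖u − u_M‖_H ≤ γ ‖u − u_M‖_V · sup_{F ∈ H, F ≠ 0} (1/‖F‖_H) inf_{v_M ∈ V_M} ‖z_F − v_M‖_V. -/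
/-!
Testing the adjoint problem with `F = ι e`, where `e = u - u_M`, gives
`‖ι e‖² = |B(e, z_F)|`. Galerkin orthogonality lets one replace `z_F` by `z_F - v_M` for any
`v_M ∈ V_M`, so boundedness of `B` yields `‖ι e‖² ≤ γ ‖e‖ ‖z_F - v_M‖ ≤ γ ‖e‖ s ‖ι e‖`,
and dividing by `‖ι e‖` gives the estimate.
-/

lemma le_of_sq_le_mul_self {a b : ℝ} (hb : 0 ≤ b) (h : a ^ 2 ≤ b * a) : a ≤ b := by
  nlinarith

lemma mul_norm_nonneg_of_norm_le {V : Type*} [SeminormedAddCommGroup V] {B : V → V → ℂ}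
    {γ : ℝ} (hB : ∀ w v, ‖B w v‖ ≤ γ * ‖w‖ * ‖v‖) (w : V) : 0 ≤ γ * ‖w‖ := by
  rcases (norm_nonneg w).eq_or_lt with hw | hw
  · rw [← hw, mul_zero]
  · exact nonneg_of_mul_nonneg_left ((norm_nonneg _).trans (hB w w)) hw

lemma apply_sub_of_forall_mem_apply_eq_zero {V W : Type*} [AddGroup W] {B : V → W → ℂ}
    (hB : ∀ w v v', B w (v - v') = B w v - B w v') {S : Set W} {e : V}
    (horth : ∀ v ∈ S, B e v = 0) (v : W) {vS : W} (hvS : vS ∈ S) :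
    B e (v - vS) = B e v := by
  rw [hB, horth vS hvS, sub_zero]

lemma norm_sq_eq_norm_of_conj_eq_inner {V H : Type*} [NormedAddCommGroup H]
    [InnerProductSpace ℂ H] (ι : V → H) {B : V → V → ℂ} {e zF : V}
    (hz : starRingEnd ℂ (B e zF) = inner ℂ (ι e) (ι e)) :
    ‖ι e‖ ^ 2 = ‖B e zF‖ := by
  rw [← RCLike.norm_conj (B e zF), hz, ← inner_self_re_eq_norm, inner_self_eq_norm_sq]

theorem stmt10_general {V H : Type*} [NormedAddCommGroup V] [InnerProductSpace ℂ V]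
    [NormedAddCommGroup H] [InnerProductSpace ℂ H]
    (ι : V →L[ℂ] H) (B : V → V → ℂ) (gam : ℝ)
    (hadd : ∀ w v v' : V, B w (v - v') = B w v - B w v')
    (hbound : ∀ w v : V, ‖B w v‖ ≤ gam * ‖w‖ * ‖v‖)
    (z : H → V)
    (hz : ∀ (F : H) (ξ : V), (starRingEnd ℂ) (B ξ (z F)) = (inner ℂ F (ι ξ) : ℂ))
    (VM : Submodule ℂ V) (u uM : V)
    (horth : ∀ vM ∈ VM, B (u - uM) vM = 0)
    (s : ℝ) (hs : 0 ≤ s)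
    (happrox : ∀ F : H, ∃ vM ∈ VM, ‖z F - vM‖ ≤ s * ‖F‖) :
    ‖ι (u - uM)‖ ≤ gam * ‖u - uM‖ * s := by
  set e := u - uM
  set F := ι e
  obtain ⟨vM, hvM, happ⟩ := happrox F
  have hγe : 0 ≤ gam * ‖e‖ := mul_norm_nonneg_of_norm_le hbound e
  refine le_of_sq_le_mul_self (mul_nonneg hγe hs) ?_
  calc ‖F‖ ^ 2 = ‖B e (z F)‖ := norm_sq_eq_norm_of_conj_eq_inner ι (hz F e)
    _ = ‖B e (z F - vM)‖ := by
      rw [apply_sub_of_forall_mem_apply_eq_zero hadd (S := VM) horth _ hvM]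
    _ ≤ gam * ‖e‖ * ‖z F - vM‖ := hbound _ _
    _ ≤ gam * ‖e‖ * (s * ‖F‖) := mul_le_mul_of_nonneg_left happ hγe
    _ = gam * ‖e‖ * s * ‖F‖ := by ring

/-- Abstract Aubin–Nitsche duality estimate: if `B` is a bounded sesquilinear form with
constant `γ`, each `F ∈ H` has an adjoint solution `z F` with
`conj B(ξ, z F) = ⟪F, ιξ⟫_H` for all `ξ`, `u − u_M` is Galerkin-orthogonal to `V_M ∋ u_M`,
and `s` bounds the normalized best-approximation error of every adjoint solution in `V_M`,
then `‖ι(u − u_M)‖_H ≤ γ ‖u − u_M‖_V · s`. -/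
theorem stmt10 {V H : Type*} [NormedAddCommGroup V] [InnerProductSpace ℂ V] [CompleteSpace V]
    [NormedAddCommGroup H] [InnerProductSpace ℂ H] [CompleteSpace H]
    (ι : V →L[ℂ] H) (B : V → V → ℂ) (gam : ℝ) (hgam : 0 < gam)
    (hadd : ∀ w v v' : V, B w (v - v') = B w v - B w v')
    (hbound : ∀ w v : V, ‖B w v‖ ≤ gam * ‖w‖ * ‖v‖)
    (z : H → V)
    (hz : ∀ (F : H) (ξ : V), (starRingEnd ℂ) (B ξ (z F)) = (inner ℂ F (ι ξ) : ℂ))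
    (VM : Submodule ℂ V) (u uM : V) (huM : uM ∈ VM)
    (horth : ∀ vM ∈ VM, B (u - uM) vM = 0)
    (s : ℝ) (hs : 0 ≤ s)
    (happrox : ∀ F : H, ∃ vM ∈ VM, ‖z F - vM‖ ≤ s * ‖F‖) :
    ‖ι (u - uM)‖ ≤ gam * ‖u - uM‖ * s :=
  stmt10_general ι B gam hadd hbound z hz VM u uM horth s hs happrox
end

section
/- Let Ω = (0,L)×(−H,H), let ε ∈ C^∞(ℝ²) be real and positive, and let u ∈ H²(Ω) be quasi-periodic. Then 2 Re ∫_Ω (x₂+H)(∂₂u) ∇·(ε^{-1}∇ū) dx = −∫_Ω [2ε^{-1}|∂₂u|² − (x₂+H)∂₂(ε^{-1})|∇u|²] dx + 2H∫_{Γ_H}(2ε^{-1}|∂₂u|² − ε^{-1}|∇u|²) dx₁ + ∫_Ω ε^{-1}|∇u|² dx + boundary terms on Γ_{−H} that vanish when the weight (x₂+H) is zero there. -/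
open MeasureTheory

/-- Partial derivative in the `x₁` direction. -/
noncomputable def pd1 (f : ℝ × ℝ → ℂ) (x : ℝ × ℝ) : ℂ := fderiv ℝ f x ((1 : ℝ), (0 : ℝ))

/-- Partial derivative in the `x₂` direction. -/
noncomputable def pd2 (f : ℝ × ℝ → ℂ) (x : ℝ × ℝ) : ℂ := fderiv ℝ f x ((0 : ℝ), (1 : ℝ))

/-- `∇·(ε⁻¹ ∇ū)`, the divergence of `ε⁻¹` times the gradient of the conjugate of `u`. -/
noncomputable def divConj (eps : ℝ × ℝ → ℝ) (u : ℝ × ℝ → ℂ) (x : ℝ × ℝ) : ℂ :=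
  pd1 (fun y => (((eps y)⁻¹ : ℝ) : ℂ) * pd1 (fun z => (starRingEnd ℂ) (u z)) y) x +
    pd2 (fun y => (((eps y)⁻¹ : ℝ) : ℂ) * pd2 (fun z => (starRingEnd ℂ) (u z)) y) x

section helpers

lemma pd1_mul {f g : ℝ × ℝ → ℂ} {x : ℝ × ℝ} (hf : DifferentiableAt ℝ f x)
    (hg : DifferentiableAt ℝ g x) :
    pd1 (fun y => f y * g y) x = pd1 f x * g x + f x * pd1 g x := by
  unfold pd1; rw [fderiv_fun_mul hf hg]; simp; ring

lemma pd2_mul {f g : ℝ × ℝ → ℂ} {x : ℝ × ℝ} (hf : DifferentiableAt ℝ f x)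
    (hg : DifferentiableAt ℝ g x) :
    pd2 (fun y => f y * g y) x = pd2 f x * g x + f x * pd2 g x := by
  unfold pd2; rw [fderiv_fun_mul hf hg]; simp; ring

lemma pd1_add {f g : ℝ × ℝ → ℂ} {x : ℝ × ℝ} (hf : DifferentiableAt ℝ f x)
    (hg : DifferentiableAt ℝ g x) :
    pd1 (fun y => f y + g y) x = pd1 f x + pd1 g x := by
  unfold pd1; rw [fderiv_fun_add hf hg]; rfl

lemma pd2_add {f g : ℝ × ℝ → ℂ} {x : ℝ × ℝ} (hf : DifferentiableAt ℝ f x)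
    (hg : DifferentiableAt ℝ g x) :
    pd2 (fun y => f y + g y) x = pd2 f x + pd2 g x := by
  unfold pd2; rw [fderiv_fun_add hf hg]; rfl

lemma pd1_sub {f g : ℝ × ℝ → ℂ} {x : ℝ × ℝ} (hf : DifferentiableAt ℝ f x)
    (hg : DifferentiableAt ℝ g x) :
    pd1 (fun y => f y - g y) x = pd1 f x - pd1 g x := by
  unfold pd1; rw [fderiv_fun_sub hf hg]; rfl

lemma pd2_sub {f g : ℝ × ℝ → ℂ} {x : ℝ × ℝ} (hf : DifferentiableAt ℝ f x)
    (hg : DifferentiableAt ℝ g x) :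
    pd2 (fun y => f y - g y) x = pd2 f x - pd2 g x := by
  unfold pd2; rw [fderiv_fun_sub hf hg]; rfl

lemma pd1_conj (f : ℝ × ℝ → ℂ) (x : ℝ × ℝ) :
    pd1 (fun y => (starRingEnd ℂ) (f y)) x = (starRingEnd ℂ) (pd1 f x) := by
  unfold pd1; simp_rw [starRingEnd_apply]; rw [fderiv_star]; rfl

lemma pd2_conj (f : ℝ × ℝ → ℂ) (x : ℝ × ℝ) :
    pd2 (fun y => (starRingEnd ℂ) (f y)) x = (starRingEnd ℂ) (pd2 f x) := by
  unfold pd2; simp_rw [starRingEnd_apply]; rw [fderiv_star]; rfl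

lemma pd_eval {f : ℝ × ℝ → ℂ} (hf : ContDiff ℝ 2 f) (x v w : ℝ × ℝ) :
    fderiv ℝ (fun y => fderiv ℝ f y w) x v = fderiv ℝ (fderiv ℝ f) x v w := by
  have hd : DifferentiableAt ℝ (fderiv ℝ f) x :=
    ((hf.fderiv_right (m := 1) (by norm_num)).differentiable (by norm_num)).differentiableAt
  have := ((ContinuousLinearMap.apply ℝ ℂ w).hasFDerivAt.comp x hd.hasFDerivAt).fderiv
  rw [Function.comp_def] at this
  rw [show (fun y => fderiv ℝ f y w) = (fun y => (ContinuousLinearMap.apply ℝ ℂ w) (fderiv ℝ f y)) from rfl, this]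
  rfl

lemma pd_comm {f : ℝ × ℝ → ℂ} (hf : ContDiff ℝ 2 f) (x : ℝ × ℝ) :
    pd1 (pd2 f) x = pd2 (pd1 f) x := by
  have hs := (hf.contDiffAt (x := x)).isSymmSndFDerivAt (by simp)
  unfold pd1 pd2
  rw [pd_eval hf, pd_eval hf]
  exact hs _ _

lemma pd_ofReal {r : ℝ × ℝ → ℝ} {x : ℝ × ℝ} (hr : DifferentiableAt ℝ r x) (v : ℝ × ℝ) :
    fderiv ℝ (fun y => ((r y : ℝ) : ℂ)) x v = ((fderiv ℝ r x v : ℝ) : ℂ) := by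
  have := (Complex.ofRealCLM.hasFDerivAt.comp x hr.hasFDerivAt).fderiv
  rw [Function.comp_def] at this
  rw [show (fun y => ((r y : ℝ) : ℂ)) = fun y => Complex.ofRealCLM (r y) from rfl, this]
  rfl

lemma pd1_ofReal {r : ℝ × ℝ → ℝ} {x : ℝ × ℝ} (hr : DifferentiableAt ℝ r x) :
    pd1 (fun y => ((r y : ℝ) : ℂ)) x = ((fderiv ℝ r x ((1:ℝ),(0:ℝ)) : ℝ) : ℂ) :=
  pd_ofReal hr _

lemma pd2_ofReal {r : ℝ × ℝ → ℝ} {x : ℝ × ℝ} (hr : DifferentiableAt ℝ r x) :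
    pd2 (fun y => ((r y : ℝ) : ℂ)) x = ((fderiv ℝ r x ((0:ℝ),(1:ℝ)) : ℝ) : ℂ) :=
  pd_ofReal hr _

lemma wc_hasFDerivAt (H : ℝ) (x : ℝ × ℝ) :
    HasFDerivAt (fun y : ℝ × ℝ => y.2 + H) (ContinuousLinearMap.snd ℝ ℝ ℝ) x :=
  (hasFDerivAt_snd).add_const H

lemma pd1_wc (H : ℝ) (x : ℝ × ℝ) : pd1 (fun y : ℝ × ℝ => ((y.2 + H : ℝ) : ℂ)) x = 0 := by
  rw [pd1_ofReal ((wc_hasFDerivAt H x).differentiableAt), (wc_hasFDerivAt H x).fderiv]; simp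

lemma pd2_wc (H : ℝ) (x : ℝ × ℝ) : pd2 (fun y : ℝ × ℝ => ((y.2 + H : ℝ) : ℂ)) x = 1 := by
  rw [pd2_ofReal ((wc_hasFDerivAt H x).differentiableAt), (wc_hasFDerivAt H x).fderiv]; simp

lemma contDiff_pd1 {f : ℝ × ℝ → ℂ} (hf : ContDiff ℝ 2 f) : ContDiff ℝ 1 (pd1 f) :=
  (ContinuousLinearMap.apply ℝ ℂ ((1:ℝ),(0:ℝ))).contDiff.comp (hf.fderiv_right (by norm_num))

lemma contDiff_pd2 {f : ℝ × ℝ → ℂ} (hf : ContDiff ℝ 2 f) : ContDiff ℝ 1 (pd2 f) :=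
  (ContinuousLinearMap.apply ℝ ℂ ((0:ℝ),(1:ℝ))).contDiff.comp (hf.fderiv_right (by norm_num))

lemma contDiff_conj {n : WithTop ℕ∞} {f : ℝ × ℝ → ℂ} (hf : ContDiff ℝ n f) :
    ContDiff ℝ n (fun y => (starRingEnd ℂ) (f y)) :=
  (Complex.conjCLE : ℂ ≃L[ℝ] ℂ).toContinuousLinearMap.contDiff.comp hf

end helpers

lemma key (u : ℝ × ℝ → ℂ) (eps : ℝ × ℝ → ℝ) (H : ℝ)
    (hu : ContDiff ℝ 2 u) (heps : ContDiff ℝ (⊤ : ℕ∞) eps) (hpos : ∀ x, 0 < eps x) (x : ℝ × ℝ) :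
    ((x.2 + H : ℝ) : ℂ) * pd2 u x * divConj eps u x
      + (starRingEnd ℂ) (((x.2 + H : ℝ) : ℂ) * pd2 u x * divConj eps u x)
    = pd1 (fun y => ((y.2 + H : ℝ) : ℂ) * (((eps y)⁻¹ : ℝ) : ℂ) *
          (pd2 u y * (starRingEnd ℂ) (pd1 u y) + (starRingEnd ℂ) (pd2 u y) * pd1 u y)) x
      + pd2 (fun y => ((y.2 + H : ℝ) : ℂ) * (((eps y)⁻¹ : ℝ) : ℂ) *
          (pd2 u y * (starRingEnd ℂ) (pd2 u y) - pd1 u y * (starRingEnd ℂ) (pd1 u y))) x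
      + ( -(2 * (((eps x)⁻¹ : ℝ) : ℂ) * (pd2 u x * (starRingEnd ℂ) (pd2 u x)))
          + ((fderiv ℝ (fun y => (eps y)⁻¹) x ((0:ℝ),(1:ℝ)) : ℝ) : ℂ) * ((x.2 + H : ℝ) : ℂ) *
            (pd1 u x * (starRingEnd ℂ) (pd1 u x) + pd2 u x * (starRingEnd ℂ) (pd2 u x))
          + (((eps x)⁻¹ : ℝ) : ℂ) *
            (pd1 u x * (starRingEnd ℂ) (pd1 u x) + pd2 u x * (starRingEnd ℂ) (pd2 u x)) ) := by
  have hne : ∀ y, eps y ≠ 0 := fun y => (hpos y).ne'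
  have ha : ContDiff ℝ (⊤ : ℕ∞) (fun y => (eps y)⁻¹) := heps.inv hne
  have hac : ContDiff ℝ (⊤ : ℕ∞) (fun y => (((eps y)⁻¹ : ℝ) : ℂ)) := Complex.ofRealCLM.contDiff.comp ha
  have hwc : ContDiff ℝ (⊤ : ℕ∞) (fun y : ℝ × ℝ => ((y.2 + H : ℝ) : ℂ)) :=
    Complex.ofRealCLM.contDiff.comp (contDiff_snd.add contDiff_const)
  have hp1 : ContDiff ℝ 1 (pd1 u) := contDiff_pd1 hu
  have hp2 : ContDiff ℝ 1 (pd2 u) := contDiff_pd2 hu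
  have da : DifferentiableAt ℝ (fun y => (eps y)⁻¹) x :=
    (ha.differentiable (by simp)).differentiableAt
  have dac : DifferentiableAt ℝ (fun y => (((eps y)⁻¹ : ℝ) : ℂ)) x :=
    (hac.differentiable (by simp)).differentiableAt
  have dwc : DifferentiableAt ℝ (fun y : ℝ × ℝ => ((y.2 + H : ℝ) : ℂ)) x :=
    (hwc.differentiable (by simp)).differentiableAt
  have dp1 : DifferentiableAt ℝ (pd1 u) x := (hp1.differentiable one_ne_zero).differentiableAt
  have dp2 : DifferentiableAt ℝ (pd2 u) x := (hp2.differentiable one_ne_zero).differentiableAt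
  have dq1 : DifferentiableAt ℝ (fun y => (starRingEnd ℂ) (pd1 u y)) x :=
    ((contDiff_conj hp1).differentiable one_ne_zero).differentiableAt
  have dq2 : DifferentiableAt ℝ (fun y => (starRingEnd ℂ) (pd2 u y)) x :=
    ((contDiff_conj hp2).differentiable one_ne_zero).differentiableAt
  have dWA : DifferentiableAt ℝ (fun y : ℝ × ℝ => ((y.2 + H : ℝ) : ℂ) * (((eps y)⁻¹ : ℝ) : ℂ)) x :=
    dwc.mul dac
  have dK1 : DifferentiableAt ℝ
      (fun y => pd2 u y * (starRingEnd ℂ) (pd1 u y) + (starRingEnd ℂ) (pd2 u y) * pd1 u y) x :=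
    (dp2.mul dq1).add (dq2.mul dp1)
  have dK2 : DifferentiableAt ℝ
      (fun y => pd2 u y * (starRingEnd ℂ) (pd2 u y) - pd1 u y * (starRingEnd ℂ) (pd1 u y)) x :=
    (dp2.mul dq2).sub (dp1.mul dq1)
  have hdiv : divConj eps u x
      = (((fderiv ℝ (fun y => (eps y)⁻¹) x ((1:ℝ),(0:ℝ)) : ℝ) : ℂ) * (starRingEnd ℂ) (pd1 u x)
          + (((eps x)⁻¹ : ℝ) : ℂ) * (starRingEnd ℂ) (pd1 (pd1 u) x))
        + (((fderiv ℝ (fun y => (eps y)⁻¹) x ((0:ℝ),(1:ℝ)) : ℝ) : ℂ) * (starRingEnd ℂ) (pd2 u x)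
          + (((eps x)⁻¹ : ℝ) : ℂ) * (starRingEnd ℂ) (pd2 (pd2 u) x)) := by
    unfold divConj
    simp_rw [pd1_conj u, pd2_conj u]
    rw [pd1_mul dac dq1, pd2_mul dac dq2, pd1_conj (pd1 u) x, pd2_conj (pd2 u) x,
      pd1_ofReal da, pd2_ofReal da]
  have eS1 : pd1 (fun y => ((y.2 + H : ℝ) : ℂ) * (((eps y)⁻¹ : ℝ) : ℂ) *
        (pd2 u y * (starRingEnd ℂ) (pd1 u y) + (starRingEnd ℂ) (pd2 u y) * pd1 u y)) x
      = (0 * (((eps x)⁻¹ : ℝ) : ℂ)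
          + ((x.2 + H : ℝ) : ℂ) * ((fderiv ℝ (fun y => (eps y)⁻¹) x ((1:ℝ),(0:ℝ)) : ℝ) : ℂ))
          * (pd2 u x * (starRingEnd ℂ) (pd1 u x) + (starRingEnd ℂ) (pd2 u x) * pd1 u x)
        + ((x.2 + H : ℝ) : ℂ) * (((eps x)⁻¹ : ℝ) : ℂ) *
          ((pd1 (pd2 u) x * (starRingEnd ℂ) (pd1 u x)
              + pd2 u x * (starRingEnd ℂ) (pd1 (pd1 u) x))
            + ((starRingEnd ℂ) (pd1 (pd2 u) x) * pd1 u x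
              + (starRingEnd ℂ) (pd2 u x) * pd1 (pd1 u) x)) := by
    rw [pd1_mul dWA dK1, pd1_mul dwc dac, pd1_wc, pd1_ofReal da,
      pd1_add (f := fun y => pd2 u y * (starRingEnd ℂ) (pd1 u y))
        (g := fun y => (starRingEnd ℂ) (pd2 u y) * pd1 u y) (dp2.mul dq1) (dq2.mul dp1), pd1_mul dp2 dq1, pd1_mul dq2 dp1,
      pd1_conj (pd1 u) x, pd1_conj (pd2 u) x]
  have eT : pd2 (fun y => ((y.2 + H : ℝ) : ℂ) * (((eps y)⁻¹ : ℝ) : ℂ) *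
        (pd2 u y * (starRingEnd ℂ) (pd2 u y) - pd1 u y * (starRingEnd ℂ) (pd1 u y))) x
      = (1 * (((eps x)⁻¹ : ℝ) : ℂ)
          + ((x.2 + H : ℝ) : ℂ) * ((fderiv ℝ (fun y => (eps y)⁻¹) x ((0:ℝ),(1:ℝ)) : ℝ) : ℂ))
          * (pd2 u x * (starRingEnd ℂ) (pd2 u x) - pd1 u x * (starRingEnd ℂ) (pd1 u x))
        + ((x.2 + H : ℝ) : ℂ) * (((eps x)⁻¹ : ℝ) : ℂ) *
          ((pd2 (pd2 u) x * (starRingEnd ℂ) (pd2 u x)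
              + pd2 u x * (starRingEnd ℂ) (pd2 (pd2 u) x))
            - (pd2 (pd1 u) x * (starRingEnd ℂ) (pd1 u x)
              + pd1 u x * (starRingEnd ℂ) (pd2 (pd1 u) x))) := by
    rw [pd2_mul dWA dK2, pd2_mul dwc dac, pd2_wc, pd2_ofReal da,
      pd2_sub (f := fun y => pd2 u y * (starRingEnd ℂ) (pd2 u y))
        (g := fun y => pd1 u y * (starRingEnd ℂ) (pd1 u y)) (dp2.mul dq2) (dp1.mul dq1), pd2_mul dp2 dq2, pd2_mul dp1 dq1,
      pd2_conj (pd2 u) x, pd2_conj (pd1 u) x]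
  rw [hdiv, eS1, eT, pd_comm hu x]
  simp only [map_add, map_mul, Complex.conj_conj, Complex.conj_ofReal]
  ring

lemma cont_pd1 {g : ℝ × ℝ → ℂ} (hg : ContDiff ℝ 1 g) : Continuous (pd1 g) :=
  (ContinuousLinearMap.apply ℝ ℂ ((1:ℝ),(0:ℝ))).continuous.comp (hg.continuous_fderiv one_ne_zero)

lemma cont_pd2 {g : ℝ × ℝ → ℂ} (hg : ContDiff ℝ 1 g) : Continuous (pd2 g) :=
  (ContinuousLinearMap.apply ℝ ℂ ((0:ℝ),(1:ℝ))).continuous.comp (hg.continuous_fderiv one_ne_zero)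

lemma integrableOn_rect {E : Type*} [NormedAddCommGroup E] [NormedSpace ℝ E]
    {g : ℝ × ℝ → E} (hg : Continuous g) (a b c d : ℝ) :
    IntegrableOn g (Set.Ioo a b ×ˢ Set.Ioo c d) :=
  (hg.continuousOn.integrableOn_compact (isCompact_Icc.prod isCompact_Icc)).mono_set
    (Set.prod_mono Set.Ioo_subset_Icc_self Set.Ioo_subset_Icc_self)

lemma ftc_col {g : ℝ × ℝ → ℂ} (hg : ContDiff ℝ 1 g) (x1 a b : ℝ) (hab : a ≤ b) :
    ∫ t in Set.Ioo a b, pd2 g (x1, t) = g (x1, b) - g (x1, a) := by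
  rw [← MeasureTheory.integral_Ioc_eq_integral_Ioo, ← intervalIntegral.integral_of_le hab]
  apply intervalIntegral.integral_eq_sub_of_hasDerivAt
  · intro t _
    have hline : HasDerivAt (fun t : ℝ => ((x1 : ℝ), t)) ((0:ℝ), (1:ℝ)) t :=
      (hasDerivAt_const t x1).prodMk (hasDerivAt_id t)
    exact ((hg.differentiable one_ne_zero (x1, t)).hasFDerivAt).comp_hasDerivAt t hline
  · exact ((cont_pd2 hg).comp (by fun_prop : Continuous fun t : ℝ => ((x1:ℝ), t))).intervalIntegrable a b

lemma ftc_row {g : ℝ × ℝ → ℂ} (hg : ContDiff ℝ 1 g) (x2 a b : ℝ) (hab : a ≤ b) :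
    ∫ t in Set.Ioo a b, pd1 g (t, x2) = g (b, x2) - g (a, x2) := by
  rw [← MeasureTheory.integral_Ioc_eq_integral_Ioo, ← intervalIntegral.integral_of_le hab]
  apply intervalIntegral.integral_eq_sub_of_hasDerivAt
  · intro t _
    have hline : HasDerivAt (fun t : ℝ => (t, (x2 : ℝ))) ((1:ℝ), (0:ℝ)) t :=
      (hasDerivAt_id t).prodMk (hasDerivAt_const t x2)
    exact ((hg.differentiable one_ne_zero (t, x2)).hasFDerivAt).comp_hasDerivAt t hline
  · exact ((cont_pd1 hg).comp (by fun_prop : Continuous fun t : ℝ => (t, (x2:ℝ)))).intervalIntegrable a b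

lemma rect_pd2 {g : ℝ × ℝ → ℂ} (hg : ContDiff ℝ 1 g) {L H : ℝ} (hH : 0 ≤ H) :
    ∫ x in Set.Ioo 0 L ×ˢ Set.Ioo (-H) H, pd2 g x
      = ∫ x1 in Set.Ioo 0 L, (g (x1, H) - g (x1, -H)) := by
  rw [MeasureTheory.Measure.volume_eq_prod ℝ ℝ, setIntegral_prod _ ?hint]
  case hint =>
    rw [← MeasureTheory.Measure.volume_eq_prod ℝ ℝ]
    exact integrableOn_rect (cont_pd2 hg) _ _ _ _
  exact integral_congr_ae (Filter.Eventually.of_forall fun x1 =>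
    ftc_col hg x1 (-H) H (by linarith))

lemma rect_pd1 {g : ℝ × ℝ → ℂ} (hg : ContDiff ℝ 1 g) {L H : ℝ} (hL : 0 ≤ L) :
    ∫ x in Set.Ioo 0 L ×ˢ Set.Ioo (-H) H, pd1 g x
      = ∫ x2 in Set.Ioo (-H) H, (g (L, x2) - g (0, x2)) := by
  rw [MeasureTheory.Measure.volume_eq_prod ℝ ℝ, ← MeasureTheory.Measure.prod_restrict,
    MeasureTheory.integral_prod_symm _ ?hint]
  case hint =>
    rw [MeasureTheory.Measure.prod_restrict, ← MeasureTheory.Measure.volume_eq_prod ℝ ℝ]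
    exact integrableOn_rect (cont_pd1 hg) _ _ _ _
  exact integral_congr_ae (Filter.Eventually.of_forall fun x2 =>
    ftc_row hg x2 0 L hL)

lemma mc (z : ℂ) : z * (starRingEnd ℂ) z = ((‖z‖^2 : ℝ) : ℂ) := by
  rw [Complex.mul_conj, Complex.normSq_eq_norm_sq]



/-- The main integration-by-parts identity in the proof of the Rellich identity:
for `ε ∈ C^∞(ℝ²)` real positive and `u` quasi-periodic (here `C²`),
`2 Re ∫_Ω (x₂+H)(∂₂u) ∇·(ε⁻¹∇ū)
 = −∫_Ω [2ε⁻¹|∂₂u|² − (x₂+H)∂₂(ε⁻¹)|∇u|²]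
   + 2H ∫_{Γ_H} (2ε⁻¹|∂₂u|² − ε⁻¹|∇u|²) + ∫_Ω ε⁻¹|∇u|²`,
the boundary terms on `Γ_{−H}` vanishing because the weight `x₂+H` is zero there. -/
theorem stmt13 (L H alpha0 : ℝ) (hL : 0 < L) (hH : 0 < H)
    (u : ℝ × ℝ → ℂ) (eps : ℝ × ℝ → ℝ)
    (hu : ContDiff ℝ 2 u) (heps : ContDiff ℝ (⊤ : ℕ∞) eps) (hepspos : ∀ x, 0 < eps x)
    (hepsper : ∀ x : ℝ × ℝ, eps (x.1 + L, x.2) = eps x)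
    (hqp0 : ∀ x2 : ℝ, u (L, x2) = Complex.exp (Complex.I * alpha0 * L) * u (0, x2))
    (hqp1 : ∀ x2 : ℝ, pd1 u (L, x2) = Complex.exp (Complex.I * alpha0 * L) * pd1 u (0, x2))
    (hqp2 : ∀ x2 : ℝ, pd2 u (L, x2) = Complex.exp (Complex.I * alpha0 * L) * pd2 u (0, x2)) :
    2 * (∫ x in Set.Ioo 0 L ×ˢ Set.Ioo (-H) H,
          ((x.2 + H : ℝ) : ℂ) * pd2 u x * divConj eps u x).re =
      -(∫ x in Set.Ioo 0 L ×ˢ Set.Ioo (-H) H,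
          (2 * (eps x)⁻¹ * ‖pd2 u x‖ ^ 2 -
            (x.2 + H) * fderiv ℝ (fun y => (eps y)⁻¹) x ((0 : ℝ), (1 : ℝ)) *
              (‖pd1 u x‖ ^ 2 + ‖pd2 u x‖ ^ 2))) +
        2 * H * (∫ x1 in Set.Ioo 0 L,
          (2 * (eps (x1, H))⁻¹ * ‖pd2 u (x1, H)‖ ^ 2 -
            (eps (x1, H))⁻¹ * (‖pd1 u (x1, H)‖ ^ 2 + ‖pd2 u (x1, H)‖ ^ 2))) +
        ∫ x in Set.Ioo 0 L ×ˢ Set.Ioo (-H) H,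
          (eps x)⁻¹ * (‖pd1 u x‖ ^ 2 + ‖pd2 u x‖ ^ 2) := by
  have hne : ∀ y, eps y ≠ 0 := fun y => (hepspos y).ne'
  have ha : ContDiff ℝ (⊤ : ℕ∞) (fun y => (eps y)⁻¹) := heps.inv hne
  have hac : ContDiff ℝ (⊤ : ℕ∞) (fun y => (((eps y)⁻¹ : ℝ) : ℂ)) := Complex.ofRealCLM.contDiff.comp ha
  have hwc : ContDiff ℝ (⊤ : ℕ∞) (fun y : ℝ × ℝ => ((y.2 + H : ℝ) : ℂ)) :=
    Complex.ofRealCLM.contDiff.comp (contDiff_snd.add contDiff_const)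
  have hp1 : ContDiff ℝ 1 (pd1 u) := contDiff_pd1 hu
  have hp2 : ContDiff ℝ 1 (pd2 u) := contDiff_pd2 hu
  have hq1 : ContDiff ℝ 1 (fun y => (starRingEnd ℂ) (pd1 u y)) := contDiff_conj hp1
  have hq2 : ContDiff ℝ 1 (fun y => (starRingEnd ℂ) (pd2 u y)) := contDiff_conj hp2
  -- the four protagonist functions
  set Ω := Set.Ioo 0 L ×ˢ Set.Ioo (-H) H with hΩ
  -- continuity of divConj
  have hdiveq : divConj eps u = fun x =>
      pd1 (fun y => (((eps y)⁻¹ : ℝ) : ℂ) * (starRingEnd ℂ) (pd1 u y)) x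
      + pd2 (fun y => (((eps y)⁻¹ : ℝ) : ℂ) * (starRingEnd ℂ) (pd2 u y)) x := by
    funext x
    unfold divConj
    simp_rw [pd1_conj u, pd2_conj u]
  have hdivcont : Continuous (divConj eps u) := by
    rw [hdiveq]
    exact (cont_pd1 ((hac.of_le (by simp)).mul hq1)).add (cont_pd2 ((hac.of_le (by simp)).mul hq2))
  have hΦcont : Continuous fun x : ℝ × ℝ => ((x.2 + H : ℝ) : ℂ) * pd2 u x * divConj eps u x :=
    (((hwc.continuous).mul (hp2.continuous)).mul hdivcont)
  have hS1c : ContDiff ℝ 1 (fun y : ℝ × ℝ => ((y.2 + H : ℝ) : ℂ) * (((eps y)⁻¹ : ℝ) : ℂ) *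
      (pd2 u y * (starRingEnd ℂ) (pd1 u y) + (starRingEnd ℂ) (pd2 u y) * pd1 u y)) :=
    (((hwc.of_le (by simp)).mul (hac.of_le (by simp))).mul ((hp2.mul hq1).add (hq2.mul hp1)))
  have hTc : ContDiff ℝ 1 (fun y : ℝ × ℝ => ((y.2 + H : ℝ) : ℂ) * (((eps y)⁻¹ : ℝ) : ℂ) *
      (pd2 u y * (starRingEnd ℂ) (pd2 u y) - pd1 u y * (starRingEnd ℂ) (pd1 u y))) :=
    (((hwc.of_le (by simp)).mul (hac.of_le (by simp))).mul ((hp2.mul hq2).sub (hp1.mul hq1)))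
  have hfd2cont : Continuous fun x => fderiv ℝ (fun y => (eps y)⁻¹) x ((0:ℝ),(1:ℝ)) :=
    (ContinuousLinearMap.apply ℝ ℝ ((0:ℝ),(1:ℝ))).continuous.comp (ha.continuous_fderiv (by simp))
  have hRcont : Continuous fun x : ℝ × ℝ =>
      ( -(2 * (((eps x)⁻¹ : ℝ) : ℂ) * (pd2 u x * (starRingEnd ℂ) (pd2 u x)))
        + ((fderiv ℝ (fun y => (eps y)⁻¹) x ((0:ℝ),(1:ℝ)) : ℝ) : ℂ) * ((x.2 + H : ℝ) : ℂ) *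
          (pd1 u x * (starRingEnd ℂ) (pd1 u x) + pd2 u x * (starRingEnd ℂ) (pd2 u x))
        + (((eps x)⁻¹ : ℝ) : ℂ) *
          (pd1 u x * (starRingEnd ℂ) (pd1 u x) + pd2 u x * (starRingEnd ℂ) (pd2 u x)) ) := by
    have hN : Continuous fun x : ℝ × ℝ =>
        pd1 u x * (starRingEnd ℂ) (pd1 u x) + pd2 u x * (starRingEnd ℂ) (pd2 u x) :=
      ((hp1.continuous.mul hq1.continuous)).add ((hp2.continuous.mul hq2.continuous))
    exact (((continuous_const.mul hac.continuous).mul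
        (hp2.continuous.mul hq2.continuous)).neg.add
        (((Complex.continuous_ofReal.comp hfd2cont).mul hwc.continuous).mul hN)).add
        (hac.continuous.mul hN)
  -- integrability
  have hintΦ : IntegrableOn (fun x : ℝ × ℝ => ((x.2 + H : ℝ) : ℂ) * pd2 u x * divConj eps u x) Ω :=
    integrableOn_rect hΦcont _ _ _ _
  have hintΦc : IntegrableOn (fun x : ℝ × ℝ =>
      (starRingEnd ℂ) (((x.2 + H : ℝ) : ℂ) * pd2 u x * divConj eps u x)) Ω :=
    integrableOn_rect (continuous_star.comp hΦcont) _ _ _ _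
  have hintS1 : IntegrableOn (pd1 (fun y : ℝ × ℝ => ((y.2 + H : ℝ) : ℂ) * (((eps y)⁻¹ : ℝ) : ℂ) *
      (pd2 u y * (starRingEnd ℂ) (pd1 u y) + (starRingEnd ℂ) (pd2 u y) * pd1 u y))) Ω :=
    integrableOn_rect (cont_pd1 hS1c) _ _ _ _
  have hintT : IntegrableOn (pd2 (fun y : ℝ × ℝ => ((y.2 + H : ℝ) : ℂ) * (((eps y)⁻¹ : ℝ) : ℂ) *
      (pd2 u y * (starRingEnd ℂ) (pd2 u y) - pd1 u y * (starRingEnd ℂ) (pd1 u y)))) Ω :=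
    integrableOn_rect (cont_pd2 hTc) _ _ _ _
  have hintR : IntegrableOn (fun x : ℝ × ℝ =>
      ( -(2 * (((eps x)⁻¹ : ℝ) : ℂ) * (pd2 u x * (starRingEnd ℂ) (pd2 u x)))
        + ((fderiv ℝ (fun y => (eps y)⁻¹) x ((0:ℝ),(1:ℝ)) : ℝ) : ℂ) * ((x.2 + H : ℝ) : ℂ) *
          (pd1 u x * (starRingEnd ℂ) (pd1 u x) + pd2 u x * (starRingEnd ℂ) (pd2 u x))
        + (((eps x)⁻¹ : ℝ) : ℂ) *
          (pd1 u x * (starRingEnd ℂ) (pd1 u x) + pd2 u x * (starRingEnd ℂ) (pd2 u x)) )) Ω :=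
    integrableOn_rect hRcont _ _ _ _
  -- main complex identity integrated over Ω
  have Emain : (∫ x in Ω, ((x.2 + H : ℝ) : ℂ) * pd2 u x * divConj eps u x)
      + (starRingEnd ℂ) (∫ x in Ω, ((x.2 + H : ℝ) : ℂ) * pd2 u x * divConj eps u x)
      = (∫ x in Ω, pd1 (fun y : ℝ × ℝ => ((y.2 + H : ℝ) : ℂ) * (((eps y)⁻¹ : ℝ) : ℂ) *
            (pd2 u y * (starRingEnd ℂ) (pd1 u y) + (starRingEnd ℂ) (pd2 u y) * pd1 u y)) x)
        + (∫ x in Ω, pd2 (fun y : ℝ × ℝ => ((y.2 + H : ℝ) : ℂ) * (((eps y)⁻¹ : ℝ) : ℂ) *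
            (pd2 u y * (starRingEnd ℂ) (pd2 u y) - pd1 u y * (starRingEnd ℂ) (pd1 u y))) x)
        + (∫ x in Ω,
            ( -(2 * (((eps x)⁻¹ : ℝ) : ℂ) * (pd2 u x * (starRingEnd ℂ) (pd2 u x)))
              + ((fderiv ℝ (fun y => (eps y)⁻¹) x ((0:ℝ),(1:ℝ)) : ℝ) : ℂ) * ((x.2 + H : ℝ) : ℂ) *
                (pd1 u x * (starRingEnd ℂ) (pd1 u x) + pd2 u x * (starRingEnd ℂ) (pd2 u x))
              + (((eps x)⁻¹ : ℝ) : ℂ) *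
                (pd1 u x * (starRingEnd ℂ) (pd1 u x) + pd2 u x * (starRingEnd ℂ) (pd2 u x)))) := by
    have h12 : IntegrableOn (fun x : ℝ × ℝ =>
        pd1 (fun y : ℝ × ℝ => ((y.2 + H : ℝ) : ℂ) * (((eps y)⁻¹ : ℝ) : ℂ) *
            (pd2 u y * (starRingEnd ℂ) (pd1 u y) + (starRingEnd ℂ) (pd2 u y) * pd1 u y)) x
          + pd2 (fun y : ℝ × ℝ => ((y.2 + H : ℝ) : ℂ) * (((eps y)⁻¹ : ℝ) : ℂ) *
            (pd2 u y * (starRingEnd ℂ) (pd2 u y) - pd1 u y * (starRingEnd ℂ) (pd1 u y))) x) Ω :=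
      hintS1.add hintT
    rw [← integral_conj, ← integral_add hintΦ hintΦc,
      integral_congr_ae (Filter.Eventually.of_forall fun x => key u eps H hu heps hepspos x),
      integral_add h12 hintR, integral_add hintS1 hintT]
  -- Piece 1 : x1-periodic boundary term vanishes
  have he : Complex.exp (Complex.I * alpha0 * L) *
      (starRingEnd ℂ) (Complex.exp (Complex.I * alpha0 * L)) = 1 := by
    have harg : (starRingEnd ℂ) (Complex.I * (alpha0 : ℂ) * (L : ℂ))
        = -(Complex.I * (alpha0 : ℂ) * (L : ℂ)) := by
      simp only [map_mul, Complex.conj_I, Complex.conj_ofReal]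
      ring
    rw [← Complex.exp_conj, harg, ← Complex.exp_add]
    simp
  have hperS1 : ∀ x2 : ℝ,
      (fun y : ℝ × ℝ => ((y.2 + H : ℝ) : ℂ) * (((eps y)⁻¹ : ℝ) : ℂ) *
        (pd2 u y * (starRingEnd ℂ) (pd1 u y) + (starRingEnd ℂ) (pd2 u y) * pd1 u y)) (L, x2)
      = (fun y : ℝ × ℝ => ((y.2 + H : ℝ) : ℂ) * (((eps y)⁻¹ : ℝ) : ℂ) *
        (pd2 u y * (starRingEnd ℂ) (pd1 u y) + (starRingEnd ℂ) (pd2 u y) * pd1 u y)) (0, x2) := by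
    intro x2
    have hepsLR : eps (L, x2) = eps (0, x2) := by simpa using hepsper (0, x2)
    simp only [hqp1 x2, hqp2 x2, hepsLR, map_mul]
    linear_combination (((x2 + H : ℝ) : ℂ) * (((eps (0, x2))⁻¹ : ℝ) : ℂ) *
      (pd2 u (0, x2) * (starRingEnd ℂ) (pd1 u (0, x2))
        + (starRingEnd ℂ) (pd2 u (0, x2)) * pd1 u (0, x2))) * he
  have ES1 : (∫ x in Ω, pd1 (fun y : ℝ × ℝ => ((y.2 + H : ℝ) : ℂ) * (((eps y)⁻¹ : ℝ) : ℂ) *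
      (pd2 u y * (starRingEnd ℂ) (pd1 u y) + (starRingEnd ℂ) (pd2 u y) * pd1 u y)) x) = 0 := by
    rw [hΩ, rect_pd1 hS1c hL.le]
    exact (integral_congr_ae (Filter.Eventually.of_forall fun x2 =>
      sub_eq_zero_of_eq (hperS1 x2))).trans (integral_zero _ _)
  -- Piece 2 : the Γ_H boundary term
  have hptT : ∀ x1 : ℝ,
      (fun y : ℝ × ℝ => ((y.2 + H : ℝ) : ℂ) * (((eps y)⁻¹ : ℝ) : ℂ) *
        (pd2 u y * (starRingEnd ℂ) (pd2 u y) - pd1 u y * (starRingEnd ℂ) (pd1 u y))) (x1, H)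
      - (fun y : ℝ × ℝ => ((y.2 + H : ℝ) : ℂ) * (((eps y)⁻¹ : ℝ) : ℂ) *
        (pd2 u y * (starRingEnd ℂ) (pd2 u y) - pd1 u y * (starRingEnd ℂ) (pd1 u y))) (x1, -H)
      = ((2 * H * (2 * (eps (x1, H))⁻¹ * ‖pd2 u (x1, H)‖ ^ 2 -
          (eps (x1, H))⁻¹ * (‖pd1 u (x1, H)‖ ^ 2 + ‖pd2 u (x1, H)‖ ^ 2)) : ℝ) : ℂ) := by
    intro x1
    simp only [mc]
    push_cast
    ring
  have ET : (∫ x in Ω, pd2 (fun y : ℝ × ℝ => ((y.2 + H : ℝ) : ℂ) * (((eps y)⁻¹ : ℝ) : ℂ) *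
      (pd2 u y * (starRingEnd ℂ) (pd2 u y) - pd1 u y * (starRingEnd ℂ) (pd1 u y))) x)
      = ((2 * H * (∫ x1 in Set.Ioo 0 L,
          (2 * (eps (x1, H))⁻¹ * ‖pd2 u (x1, H)‖ ^ 2 -
            (eps (x1, H))⁻¹ * (‖pd1 u (x1, H)‖ ^ 2 + ‖pd2 u (x1, H)‖ ^ 2))) : ℝ) : ℂ) := by
    have step1 := (rect_pd2 hTc (L := L) hH.le).trans
      (integral_congr_ae (Filter.Eventually.of_forall hptT))
    have step2 : (∫ x1 in Set.Ioo 0 L, ((2 * H * (2 * (eps (x1, H))⁻¹ * ‖pd2 u (x1, H)‖ ^ 2 -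
        (eps (x1, H))⁻¹ * (‖pd1 u (x1, H)‖ ^ 2 + ‖pd2 u (x1, H)‖ ^ 2)) : ℝ) : ℂ))
        = ((∫ x1 in Set.Ioo 0 L, (2 * H * (2 * (eps (x1, H))⁻¹ * ‖pd2 u (x1, H)‖ ^ 2 -
        (eps (x1, H))⁻¹ * (‖pd1 u (x1, H)‖ ^ 2 + ‖pd2 u (x1, H)‖ ^ 2)) : ℝ) : ℝ) : ℂ) :=
      integral_ofReal
    rw [hΩ]
    rw [step1, step2, integral_const_mul]
  -- Piece 3 : the remaining bulk terms
  have hptR : ∀ x : ℝ × ℝ,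
      ( -(2 * (((eps x)⁻¹ : ℝ) : ℂ) * (pd2 u x * (starRingEnd ℂ) (pd2 u x)))
        + ((fderiv ℝ (fun y => (eps y)⁻¹) x ((0:ℝ),(1:ℝ)) : ℝ) : ℂ) * ((x.2 + H : ℝ) : ℂ) *
          (pd1 u x * (starRingEnd ℂ) (pd1 u x) + pd2 u x * (starRingEnd ℂ) (pd2 u x))
        + (((eps x)⁻¹ : ℝ) : ℂ) *
          (pd1 u x * (starRingEnd ℂ) (pd1 u x) + pd2 u x * (starRingEnd ℂ) (pd2 u x)) )
      = (((-(2 * (eps x)⁻¹ * ‖pd2 u x‖ ^ 2 -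
            (x.2 + H) * fderiv ℝ (fun y => (eps y)⁻¹) x ((0 : ℝ), (1 : ℝ)) *
              (‖pd1 u x‖ ^ 2 + ‖pd2 u x‖ ^ 2))
          + (eps x)⁻¹ * (‖pd1 u x‖ ^ 2 + ‖pd2 u x‖ ^ 2)) : ℝ) : ℂ) := by
    intro x
    simp only [mc]
    push_cast
    ring
  have hintf : IntegrableOn (fun x : ℝ × ℝ =>
      (2 * (eps x)⁻¹ * ‖pd2 u x‖ ^ 2 -
        (x.2 + H) * fderiv ℝ (fun y => (eps y)⁻¹) x ((0 : ℝ), (1 : ℝ)) *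
          (‖pd1 u x‖ ^ 2 + ‖pd2 u x‖ ^ 2))) Ω := by
    apply integrableOn_rect
    have h1 : Continuous fun x : ℝ × ℝ => ‖pd1 u x‖ ^ 2 := (hp1.continuous.norm).pow 2
    have h2 : Continuous fun x : ℝ × ℝ => ‖pd2 u x‖ ^ 2 := (hp2.continuous.norm).pow 2
    exact ((continuous_const.mul (ha.continuous)).mul h2).sub
      ((((continuous_snd.add continuous_const).mul hfd2cont)).mul (h1.add h2))
  have hintg : IntegrableOn (fun x : ℝ × ℝ =>
      (eps x)⁻¹ * (‖pd1 u x‖ ^ 2 + ‖pd2 u x‖ ^ 2)) Ω := by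
    apply integrableOn_rect
    exact (ha.continuous).mul (((hp1.continuous.norm).pow 2).add ((hp2.continuous.norm).pow 2))
  have ER : (∫ x in Ω,
      ( -(2 * (((eps x)⁻¹ : ℝ) : ℂ) * (pd2 u x * (starRingEnd ℂ) (pd2 u x)))
        + ((fderiv ℝ (fun y => (eps y)⁻¹) x ((0:ℝ),(1:ℝ)) : ℝ) : ℂ) * ((x.2 + H : ℝ) : ℂ) *
          (pd1 u x * (starRingEnd ℂ) (pd1 u x) + pd2 u x * (starRingEnd ℂ) (pd2 u x))
        + (((eps x)⁻¹ : ℝ) : ℂ) *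
          (pd1 u x * (starRingEnd ℂ) (pd1 u x) + pd2 u x * (starRingEnd ℂ) (pd2 u x)) ))
      = (((-(∫ x in Ω, (2 * (eps x)⁻¹ * ‖pd2 u x‖ ^ 2 -
            (x.2 + H) * fderiv ℝ (fun y => (eps y)⁻¹) x ((0 : ℝ), (1 : ℝ)) *
              (‖pd1 u x‖ ^ 2 + ‖pd2 u x‖ ^ 2)))
          + ∫ x in Ω, (eps x)⁻¹ * (‖pd1 u x‖ ^ 2 + ‖pd2 u x‖ ^ 2)) : ℝ) : ℂ) := by
    have hintnf : IntegrableOn (fun x : ℝ × ℝ =>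
        -(2 * (eps x)⁻¹ * ‖pd2 u x‖ ^ 2 -
          (x.2 + H) * fderiv ℝ (fun y => (eps y)⁻¹) x ((0 : ℝ), (1 : ℝ)) *
            (‖pd1 u x‖ ^ 2 + ‖pd2 u x‖ ^ 2))) Ω := hintf.neg
    have step1 := integral_congr_ae (μ := volume.restrict Ω) (Filter.Eventually.of_forall hptR)
    have step2 : (∫ x in Ω, ((-(2 * (eps x)⁻¹ * ‖pd2 u x‖ ^ 2 -
            (x.2 + H) * fderiv ℝ (fun y => (eps y)⁻¹) x ((0 : ℝ), (1 : ℝ)) *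
              (‖pd1 u x‖ ^ 2 + ‖pd2 u x‖ ^ 2))
          + (eps x)⁻¹ * (‖pd1 u x‖ ^ 2 + ‖pd2 u x‖ ^ 2) : ℝ) : ℂ))
        = ((∫ x in Ω, (-(2 * (eps x)⁻¹ * ‖pd2 u x‖ ^ 2 -
            (x.2 + H) * fderiv ℝ (fun y => (eps y)⁻¹) x ((0 : ℝ), (1 : ℝ)) *
              (‖pd1 u x‖ ^ 2 + ‖pd2 u x‖ ^ 2))
          + (eps x)⁻¹ * (‖pd1 u x‖ ^ 2 + ‖pd2 u x‖ ^ 2)) : ℝ) : ℂ) := integral_ofReal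
    rw [step1, step2, integral_add hintnf hintg, integral_neg]
  rw [ES1, ET, ER] at Emain
  have final := congrArg Complex.re Emain
  simp only [Complex.add_re, Complex.conj_re, Complex.ofReal_re, Complex.zero_re] at final
  linarith
end
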